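/- Let n₀ ≥ 1 be an integer and M ∈ ℂ, M ≠ 0. Suppose g : [0,∞) → (ℂ → ℂ) satisfies: for every ξ with |ξ| ≤ 1, lim_{t→∞} [g(ξ,t) − ξ]·(2t)^{1 + n₀/2} = conj(M)·ξ^{n₀+1}, and this convergence is uniform on the closed unit disk. Then lim_{t→∞} max_{|ξ|=1} ||g(ξ,t)| − 1|·(2t)^{1 + n₀/2} = |M|. -/

import Mathlib

open Filter ComplexConjugate

theorem stmt_15 (n₀ : ℕ) (hn₀ : 1 ≤ n₀) (M : ℂ) (hM : M ≠ 0)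
    (g : ℝ → ℂ → ℂ)
    (hptwise : ∀ ξ : ℂ, ‖ξ‖ ≤ 1 →
      Tendsto (fun t : ℝ => (g t ξ - ξ) * (((2 * t) ^ (1 + (n₀ : ℝ) / 2) : ℝ) : ℂ))
        atTop (nhds (conj M * ξ ^ (n₀ + 1))))
    (hunif : TendstoUniformlyOn
      (fun t : ℝ => fun ξ : ℂ => (g t ξ - ξ) * (((2 * t) ^ (1 + (n₀ : ℝ) / 2) : ℝ) : ℂ))
      (fun ξ : ℂ => conj M * ξ ^ (n₀ + 1)) atTop (Metric.closedBall 0 1)) :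
    Tendsto (fun t : ℝ =>
        sSup ((fun ξ : ℂ => |‖g t ξ‖ - 1| * (2 * t) ^ (1 + (n₀ : ℝ) / 2)) ''
          Metric.sphere (0 : ℂ) 1)) atTop (nhds (‖M‖)) := by
  set p : ℝ := 1 + (n₀ : ℝ) / 2 with hp
  have hMabs : ‖M‖ ≠ 0 := norm_ne_zero_iff.mpr hM
  set w : ℂ := M / (‖M‖ : ℂ) with hwdef
  have hw0 : w ≠ 0 := div_ne_zero hM (by exact_mod_cast hMabs)
  have habsw : ‖w‖ = 1 := by
    rw [hwdef, norm_div, Complex.norm_real, Real.norm_eq_abs, abs_of_nonneg (norm_nonneg M),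
      div_self hMabs]
  have hn0C : (n₀ : ℂ) ≠ 0 := Nat.cast_ne_zero.mpr (by omega)
  set ξ₀ : ℂ := Complex.exp ((w.arg / n₀ : ℝ) * Complex.I) with hξ₀def
  have habsξ₀ : ‖ξ₀‖ = 1 := Complex.norm_exp_ofReal_mul_I _
  have hξ₀pow : ξ₀ ^ n₀ = w := by
    rw [hξ₀def, ← Complex.exp_nat_mul]
    have : (n₀ : ℂ) * ((w.arg / n₀ : ℝ) * Complex.I) = (w.arg : ℂ) * Complex.I := by
      push_cast
      field_simp
    rw [this]
    calc Complex.exp ((w.arg : ℂ) * Complex.I)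
        = (‖w‖ : ℂ) * Complex.exp ((w.arg : ℂ) * Complex.I) := by
          rw [habsw]; push_cast; ring
      _ = w := Complex.norm_mul_exp_arg_mul_I w
  have hcm : conj M * w = (‖M‖ : ℂ) := by
    rw [hwdef, mul_div_assoc', mul_comm (conj M) M, Complex.mul_conj,
      Complex.normSq_eq_norm_sq]
    push_cast
    rw [sq, mul_div_assoc, div_self (by exact_mod_cast hMabs), mul_one]
  have hlimξ₀ : conj M * ξ₀ ^ (n₀ + 1) = (‖M‖ : ℂ) * ξ₀ := by
    rw [pow_succ, ← mul_assoc, hξ₀pow, hcm]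
  have hξ₀mem : ξ₀ ∈ Metric.sphere (0 : ℂ) 1 := by
    simp [Complex.dist_eq, habsξ₀]
  rw [Metric.tendsto_atTop]
  intro ε hε
  have hunif' := Metric.tendstoUniformlyOn_iff.mp hunif (ε / 2) (half_pos hε)
  have hev : ∀ᶠ t : ℝ in atTop, (0 < t) ∧
      ∀ x ∈ Metric.closedBall (0 : ℂ) 1,
        dist (conj M * x ^ (n₀ + 1)) ((g t x - x) * (((2 * t) ^ p : ℝ) : ℂ)) < ε / 2 := by
    filter_upwards [eventually_gt_atTop 0, hunif'] with t h1 h2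
    exact ⟨h1, h2⟩
  rw [eventually_atTop] at hev
  obtain ⟨N, hN⟩ := hev
  refine ⟨N, fun t ht => ?_⟩
  obtain ⟨htpos, hclose⟩ := hN t ht
  set P : ℝ := (2 * t) ^ p with hP
  have hPnn : 0 ≤ P := Real.rpow_nonneg (by linarith) _
  -- key upper bound for every ξ on the sphere
  have key : ∀ ξ ∈ Metric.sphere (0 : ℂ) 1,
      |‖g t ξ‖ - 1| * P ≤ ‖M‖ + ε / 2 := by
    intro ξ hξ
    have habsξ : ‖ξ‖ = 1 := by
      simpa [Complex.dist_eq] using hξ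
    have hξball : ξ ∈ Metric.closedBall (0 : ℂ) 1 := by
      simp [Complex.dist_eq, habsξ]
    have h1 : |‖g t ξ‖ - 1| ≤ ‖g t ξ - ξ‖ := by
      rw [← habsξ]
      exact abs_norm_sub_norm_le _ _
    have h2 : ‖g t ξ - ξ‖ * P = ‖(g t ξ - ξ) * ((P : ℝ) : ℂ)‖ := by
      rw [norm_mul, Complex.norm_real, Real.norm_eq_abs, abs_of_nonneg hPnn]
    have h3 : ‖(g t ξ - ξ) * ((P : ℝ) : ℂ)‖ ≤
        ‖conj M * ξ ^ (n₀ + 1)‖ + ε / 2 := by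
      have hd := hclose ξ hξball
      have : ‖(g t ξ - ξ) * ((P : ℝ) : ℂ)‖ ≤
          ‖conj M * ξ ^ (n₀ + 1)‖ +
            ‖(g t ξ - ξ) * ((P : ℝ) : ℂ) - conj M * ξ ^ (n₀ + 1)‖ := by
        have := norm_add_le ((g t ξ - ξ) * ((P : ℝ) : ℂ) - conj M * ξ ^ (n₀ + 1))
          (conj M * ξ ^ (n₀ + 1))
        simpa [sub_add_cancel, add_comm] using this
      refine this.trans ?_
      have hd' : ‖(g t ξ - ξ) * ((P : ℝ) : ℂ) - conj M * ξ ^ (n₀ + 1)‖ < ε / 2 := by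
        rw [← Complex.dist_eq, dist_comm]
        exact hd
      linarith
    have h4 : ‖conj M * ξ ^ (n₀ + 1)‖ = ‖M‖ := by
      rw [norm_mul, norm_pow, Complex.norm_conj, habsξ, one_pow, mul_one]
    calc |‖g t ξ‖ - 1| * P ≤ ‖g t ξ - ξ‖ * P :=
          mul_le_mul_of_nonneg_right h1 hPnn
      _ = ‖(g t ξ - ξ) * ((P : ℝ) : ℂ)‖ := h2
      _ ≤ ‖conj M * ξ ^ (n₀ + 1)‖ + ε / 2 := h3
      _ = ‖M‖ + ε / 2 := by rw [h4]
  set S : Set ℝ := (fun ξ : ℂ => |‖g t ξ‖ - 1| * (2 * t) ^ p) ''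
      Metric.sphere (0 : ℂ) 1 with hS
  have hSne : S.Nonempty := ⟨_, Set.mem_image_of_mem _ hξ₀mem⟩
  have hSbdd : BddAbove S := by
    refine ⟨‖M‖ + ε / 2, ?_⟩
    rintro x ⟨ξ, hξ, rfl⟩
    exact key ξ hξ
  have hupper : sSup S ≤ ‖M‖ + ε / 2 := by
    refine csSup_le hSne ?_
    rintro x ⟨ξ, hξ, rfl⟩
    exact key ξ hξ
  -- lower bound using ξ₀
  have hlower : ‖M‖ - ε / 2 ≤ sSup S := by
    have hmem : |‖g t ξ₀‖ - 1| * P ∈ S := Set.mem_image_of_mem _ hξ₀mem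
    refine le_trans ?_ (le_csSup hSbdd hmem)
    have hδ : ‖(‖M‖ : ℂ) * ξ₀ - (g t ξ₀ - ξ₀) * ((P : ℝ) : ℂ)‖ < ε / 2 := by
      have := hclose ξ₀ (by simp [Complex.dist_eq, habsξ₀])
      rw [hlimξ₀] at this
      simpa [Complex.dist_eq] using this
    have h5 : ‖ξ₀ * ((P : ℝ) : ℂ) + (‖M‖ : ℂ) * ξ₀‖ =
        P + ‖M‖ := by
      have : ξ₀ * ((P : ℝ) : ℂ) + (‖M‖ : ℂ) * ξ₀
          = ξ₀ * (((P + ‖M‖ : ℝ) : ℝ) : ℂ) := by push_cast; ring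
      rw [this, norm_mul, habsξ₀, one_mul, Complex.norm_real, Real.norm_eq_abs,
        abs_of_nonneg (by positivity)]
    have h6 : ‖g t ξ₀‖ * P = ‖ξ₀ * ((P : ℝ) : ℂ) + (g t ξ₀ - ξ₀) * ((P : ℝ) : ℂ)‖ := by
      rw [show ξ₀ * ((P : ℝ) : ℂ) + (g t ξ₀ - ξ₀) * ((P : ℝ) : ℂ) = g t ξ₀ * ((P : ℝ) : ℂ) by ring]
      rw [norm_mul, Complex.norm_real, Real.norm_eq_abs, abs_of_nonneg hPnn]
    have h7 : P + ‖M‖ - ε / 2 ≤ ‖g t ξ₀‖ * P := by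
      rw [h6]
      have hsub : ‖ξ₀ * ((P : ℝ) : ℂ) + (‖M‖ : ℂ) * ξ₀‖ -
          ‖ξ₀ * ((P : ℝ) : ℂ) + (g t ξ₀ - ξ₀) * ((P : ℝ) : ℂ)‖ ≤
          ‖(‖M‖ : ℂ) * ξ₀ - (g t ξ₀ - ξ₀) * ((P : ℝ) : ℂ)‖ := by
        have := norm_sub_norm_le (ξ₀ * ((P : ℝ) : ℂ) + (‖M‖ : ℂ) * ξ₀)
          (ξ₀ * ((P : ℝ) : ℂ) + (g t ξ₀ - ξ₀) * ((P : ℝ) : ℂ))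
        rw [show ξ₀ * ((P : ℝ) : ℂ) + (‖M‖ : ℂ) * ξ₀ -
            (ξ₀ * ((P : ℝ) : ℂ) + (g t ξ₀ - ξ₀) * ((P : ℝ) : ℂ)) =
            (‖M‖ : ℂ) * ξ₀ - (g t ξ₀ - ξ₀) * ((P : ℝ) : ℂ) by ring] at this
        simpa using this
      linarith
    have h8 : ‖g t ξ₀‖ * P - P ≤ |‖g t ξ₀‖ - 1| * P := by
      have : ‖g t ξ₀‖ - 1 ≤ |‖g t ξ₀‖ - 1| := le_abs_self _
      nlinarith
    linarith
  rw [Real.dist_eq, abs_sub_lt_iff]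
  constructor <;> linarith
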